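/- Let ν be a class (ii) distribution with associated functions f, φ, Φ such that Φ⁻¹ is pseudo-regularly varying, i.e., limsup_{c→1} limsup_{x→∞} Φ⁻¹(cx)/Φ⁻¹(x) = 1. Let θ > 1 and let F_Φ be the associated divergence-generating function. Let η be a probability measure on [0,∞) with density g satisfying liminf_{x→∞} x^{t+1} g(x) > 0 for some t ∈ (1, θ). Then D_{F_Φ}(η|ν) = ∞. -/

import Mathlib

open Filter MeasureTheory Set
open scoped ENNReal Topology

noncomputable section

/-- The `F`-divergence `D_F(η|ν)` between a reference density `f` and an
alternative density `g` on `(0,∞)` (the value `⊤` encodes an infinite divergence). -/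
def Ddiv (F f g : ℝ → ℝ) : ℝ≥0∞ :=
  ∫⁻ x in Set.Ioi (0 : ℝ), ENNReal.ofReal (F (g x / f x) * f x)

/-- Generator of the polynomial (α-) divergence: `F(y) = (y^α - 1)/(α(α-1))`. -/
def Falpha (α : ℝ) : ℝ → ℝ := fun y => (y ^ α - 1) / (α * (α - 1))

/-- Class (i): the log-density grows at least linearly, `lim φ(x)/x > c > 0`. -/
def IsClassI (φ : ℝ → ℝ) : Prop :=
  ∃ c : ℝ, 0 < c ∧ ∀ᶠ x in atTop, c < φ x / x

/-- Data witnessing that a distribution with log-density `φ` (density `exp(-φ)`) is of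
class (ii): heavier than exponential but lighter than any power law, together with the
auxiliary function `Φ` and the inverse `Ψ = Φ⁻¹` of its restriction to `[x̄, ∞)`. -/
structure ClassIIData (φ : ℝ → ℝ) : Type where
  xbar : ℝ
  Φ : ℝ → ℝ
  Ψ : ℝ → ℝ
  xbar_pos : 0 < xbar
  tendsto_div_id : Tendsto (fun x => φ x / x) atTop (nhds 0)
  tendsto_div_log : Tendsto (fun x => φ x / Real.log x) atTop atTop
  pos : ∀ x ∈ Set.Ici xbar, 0 < Φ x
  strictConcave : StrictConcaveOn ℝ (Set.Ici xbar) Φ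
  smooth : ContDiffOn ℝ 2 Φ (Set.Ici xbar)
  strictMono : StrictMonoOn Φ (Set.Ici xbar)
  inv_left : ∀ x ∈ Set.Ici xbar, Ψ (Φ x) = x
  inv_right : ∀ y ∈ Set.Ici (Φ xbar), Φ (Ψ y) = y
  liminf_pos : ∃ c : ℝ, 0 < c ∧ ∀ᶠ x in atTop, c ≤ Ψ (φ x) / x
  limsup_lt_top : ∃ C : ℝ, ∀ᶠ x in atTop, Ψ (φ x) / x ≤ C

namespace ClassIIData

variable {φ : ℝ → ℝ}

/-- `ȳ = exp(Φ(x̄))`. -/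
def ybar (d : ClassIIData φ) : ℝ := Real.exp (d.Φ d.xbar)

/-- The constant `a = (1+log ȳ)/(Φ⁻¹(log ȳ)^θ + θ Φ⁻¹(log ȳ)^{θ-1} (Φ⁻¹)'(log ȳ))`. -/
def aconst (d : ClassIIData φ) (θ : ℝ) : ℝ :=
  (1 + Real.log d.ybar) /
    (d.Ψ (Real.log d.ybar) ^ θ +
      θ * d.Ψ (Real.log d.ybar) ^ (θ - 1) * deriv d.Ψ (Real.log d.ybar))

/-- The constant `b = ȳ log ȳ - a ȳ Φ⁻¹(log ȳ)^θ`. -/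
def bconst (d : ClassIIData φ) (θ : ℝ) : ℝ :=
  d.ybar * Real.log d.ybar - d.aconst θ * d.ybar * d.Ψ (Real.log d.ybar) ^ θ

/-- The divergence generator `F_Φ`: `y log y` for `y ≤ ȳ` and
`a y Φ⁻¹(log y)^θ + b` for `y > ȳ`. -/
def FPhi (d : ClassIIData φ) (θ : ℝ) : ℝ → ℝ := fun y =>
  if y ≤ d.ybar then y * Real.log y
  else d.aconst θ * y * d.Ψ (Real.log y) ^ θ + d.bconst θ

/-- `ψ(x) = a Φ⁻¹(x)^θ`. -/
def psiFun (d : ClassIIData φ) (θ : ℝ) : ℝ → ℝ := fun x => d.aconst θ * d.Ψ x ^ θ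

/-- The integrand of `I(c) = ∫_c^∞ e^y (ψ(y)+ψ'(y))(ψ'(y)+ψ''(y)) f((F_Φ'(e^y)-α₁)/α₂) dy`. -/
def Iintegrand (d : ClassIIData φ) (θ α₁ α₂ : ℝ) (f : ℝ → ℝ) : ℝ → ℝ := fun y =>
  Real.exp y * (d.psiFun θ y + deriv (d.psiFun θ) y) *
    (deriv (d.psiFun θ) y + deriv (deriv (d.psiFun θ)) y) *
    f ((deriv (d.FPhi θ) (Real.exp y) - α₁) / α₂)

end ClassIIData

/-- Convex conjugate over `s ≥ 0`: `F*(x) = sup_{s ≥ 0} (x s - F(s))`. -/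
def Fstar (F : ℝ → ℝ) : ℝ → ℝ := fun x => sSup ((fun s => x * s - F s) '' Set.Ici (0 : ℝ))

/-- Pseudo-regular variation: `limsup_{c→1} limsup_{x→∞} h(cx)/h(x) = 1`,
spelled out in ε-form. -/
def PseudoRegularlyVarying (h : ℝ → ℝ) : Prop :=
  (∀ ε > (0:ℝ), ∀ᶠ c in nhds (1:ℝ), ∀ᶠ x in atTop, h (c * x) / h x ≤ 1 + ε) ∧
  (∀ ε > (0:ℝ), ∃ᶠ c in nhds (1:ℝ), ∃ᶠ x in atTop, 1 - ε ≤ h (c * x) / h x)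

/-!
Write `Ψ = Φ⁻¹` and `u = log (g / f) = φ + log g` for the log-likelihood ratio. The tail bound
`g(x) ≥ c x^{-(t+1)}` costs only `O(log x) = o(φ x)`, so `u ≥ φ / κ` eventually for every
`κ > 1`. Pseudo-regular variation gives one `κ > 1` with `Ψ(κ v) ≤ 2 Ψ(v)` for large `v`,
hence `Ψ(u) ≥ Ψ(φ) / 2 ≥ c₁ x / 2` by the class (ii) condition `liminf Ψ(φ x) / x > 0`.
Then `F_Φ(g/f) f ≥ (a/2) g Ψ(u)^θ ≳ x^{θ-t-1}`, which is not integrable at infinity as `t < θ`.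
-/

open Real

theorem PseudoRegularlyVarying.exists_eventually_le_two_mul {h : ℝ → ℝ}
    (hh : PseudoRegularlyVarying h) (hpos : ∀ᶠ x in atTop, 0 < h x) :
    ∃ κ > 1, ∀ᶠ x in atTop, h (κ * x) ≤ 2 * h x := by
  obtain ⟨κ, hκ, hev⟩ := ((frequently_gt_nhds (1 : ℝ)).and_eventually (hh.1 1 one_pos)).exists
  refine ⟨κ, hκ, ?_⟩
  filter_upwards [hev, hpos] with x hx hx0
  linarith [(div_le_iff₀ hx0).mp hx]

theorem MonotoneOn.deriv_nonneg_Ici {g : ℝ → ℝ} {a : ℝ} (hg : MonotoneOn g (Ici a)) :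
    0 ≤ deriv g a := by
  by_cases hd : DifferentiableAt ℝ g a
  · rw [← hd.derivWithin (uniqueDiffWithinAt_Ici a)]
    exact hg.derivWithin_nonneg
  · rw [deriv_zero_of_not_differentiableAt hd]

theorem eventually_mul_log_le_of_tendsto_div_log {φ : ℝ → ℝ}
    (hφ : Tendsto (fun x => φ x / log x) atTop atTop) (K : ℝ) {δ : ℝ} (hδ : 0 < δ) :
    ∀ᶠ x in atTop, K * log x ≤ δ * φ x := by
  filter_upwards [hφ.eventually_ge_atTop (K / δ), eventually_gt_atTop 1] with x hx hx1
  calc K * log x = δ * (K / δ * log x) := by field_simp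
    _ ≤ δ * φ x := by gcongr; exact (le_div_iff₀ (log_pos hx1)).mp hx

theorem eventually_neg_log_le_mul_log {g : ℝ → ℝ} {r c : ℝ} (hc : 0 < c)
    (hg : ∀ᶠ x in atTop, c ≤ x ^ r * g x) :
    ∀ᶠ x in atTop, 0 < g x ∧ -log (g x) ≤ (r + |log c|) * log x := by
  filter_upwards [hg, eventually_ge_atTop (exp 1)] with x hgx hx
  have hx0 : 0 < x := (exp_pos 1).trans_le hx
  have hlx : 1 ≤ log x := by rwa [le_log_iff_exp_le hx0]
  have hxr : 0 < x ^ r := rpow_pos_of_pos hx0 r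
  have hg0 : 0 < g x := pos_of_mul_pos_right (hc.trans_le hgx) hxr.le
  refine ⟨hg0, ?_⟩
  have hlog := log_le_log hc hgx
  rw [log_mul hxr.ne' hg0.ne', log_rpow hx0] at hlog
  nlinarith [neg_abs_le (log c), mul_nonneg (abs_nonneg (log c)) (sub_nonneg.2 hlx)]

theorem eventually_div_le_log_div {φ f g : ℝ → ℝ}
    (hφ : Tendsto (fun x => φ x / log x) atTop atTop)
    (hf : ∀ x ∈ Ioi (0 : ℝ), f x = exp (-φ x)) {r c : ℝ} (hc : 0 < c)
    (hg : ∀ᶠ x in atTop, c ≤ x ^ r * g x) {κ : ℝ} (hκ : 1 < κ) :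
    ∀ᶠ x in atTop, 0 < g x ∧ φ x / κ ≤ log (g x / f x) := by
  have hδ : 0 < 1 - κ⁻¹ := sub_pos.2 (inv_lt_one_of_one_lt₀ hκ)
  filter_upwards [eventually_neg_log_le_mul_log hc hg,
    eventually_mul_log_le_of_tendsto_div_log hφ (r + |log c|) hδ, eventually_gt_atTop 0]
    with x ⟨hg0, hlog⟩ hK hx
  refine ⟨hg0, ?_⟩
  rw [log_div hg0.ne' (by rw [hf x hx]; positivity), hf x hx, log_exp]
  have hsplit : φ x / κ = φ x - (1 - κ⁻¹) * φ x := by field_simp; ring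
  linarith

theorem lintegral_Ioi_ofReal_eq_top_of_eventually_le {F : ℝ → ℝ} {C s : ℝ} (a : ℝ)
    (hC : 0 < C) (hs : -1 ≤ s) (hF : ∀ᶠ x in atTop, C * x ^ s ≤ F x) :
    ∫⁻ x in Ioi a, ENNReal.ofReal (F x) = ⊤ := by
  obtain ⟨M, hM⟩ := eventually_atTop.mp (hF.and (eventually_ge_atTop (max a 1)))
  have haM : max a 1 ≤ M := (hM M le_rfl).2
  have hM0 : 0 < M := zero_lt_one.trans_le ((le_max_right a 1).trans haM)
  have hpow : ∫⁻ x in Ioi M, ENNReal.ofReal (x ^ s) = ⊤ := by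
    by_contra hfin
    have hnn : 0 ≤ᵐ[volume.restrict (Ioi M)] fun x : ℝ => x ^ s := by
      filter_upwards [ae_restrict_mem measurableSet_Ioi] with x hx
      exact rpow_nonneg (hM0.trans hx).le s
    have hint := (lintegral_ofReal_ne_top_iff_integrable
      (by fun_prop : Measurable fun x : ℝ => x ^ s).aestronglyMeasurable hnn).mp hfin
    linarith [(integrableOn_Ioi_rpow_iff hM0).mp hint]
  refine eq_top_iff.mpr ?_
  calc ⊤ = ENNReal.ofReal C * ∫⁻ x in Ioi M, ENNReal.ofReal (x ^ s) := by
        rw [hpow, ENNReal.mul_top (by simpa using hC)]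
    _ = ∫⁻ x in Ioi M, ENNReal.ofReal (C * x ^ s) := by
        rw [← lintegral_const_mul' _ _ ENNReal.ofReal_ne_top]
        simp only [ENNReal.ofReal_mul hC.le]
    _ ≤ ∫⁻ x in Ioi M, ENNReal.ofReal (F x) :=
        setLIntegral_mono' measurableSet_Ioi fun x hx =>
          ENNReal.ofReal_le_ofReal (hM x (le_of_lt hx)).1
    _ ≤ ∫⁻ x in Ioi a, ENNReal.ofReal (F x) :=
        lintegral_mono_set (Ioi_subset_Ioi ((le_max_left a 1).trans haM))

namespace ClassIIData

variable {φ : ℝ → ℝ}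

theorem tendsto_atTop (d : ClassIIData φ) : Tendsto φ atTop atTop := by
  refine tendsto_atTop_mono' atTop ?_ tendsto_log_atTop
  filter_upwards [d.tendsto_div_log.eventually_ge_atTop 1, eventually_gt_atTop 1] with x h hx
  simpa using (le_div_iff₀ (log_pos hx)).mp h

variable (d : ClassIIData φ)

theorem exists_le_Φ (M : ℝ) : ∃ z, d.xbar ≤ z ∧ M ≤ d.Φ z := by
  obtain ⟨c, hc, hev⟩ := d.liminf_pos
  obtain ⟨x, hcx, hφx, hx⟩ := (hev.and
    ((d.tendsto_atTop.eventually_ge_atTop (max M (d.Φ d.xbar))).and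
      (eventually_ge_atTop (max (d.xbar / c) 1)))).exists
  have hx0 : 0 < x := zero_lt_one.trans_le (le_of_max_le_right hx)
  refine ⟨d.Ψ (φ x), ?_, ?_⟩
  · calc d.xbar ≤ c * x := (div_le_iff₀' hc).mp (le_of_max_le_left hx)
      _ ≤ d.Ψ (φ x) := (le_div_iff₀ hx0).mp hcx
  · rw [d.inv_right _ (le_of_max_le_right hφx)]
    exact le_of_max_le_left hφx

theorem xbar_le_Ψ {y : ℝ} (hy : d.Φ d.xbar ≤ y) : d.xbar ≤ d.Ψ y := by
  obtain ⟨z, hz, hyz⟩ := d.exists_le_Φ y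
  obtain ⟨w, hw, rfl⟩ :=
    intermediate_value_Icc hz (d.smooth.continuousOn.mono Icc_subset_Ici_self) ⟨hy, hyz⟩
  rw [d.inv_left w hw.1]
  exact hw.1

theorem eventually_Ψ_pos : ∀ᶠ y in atTop, 0 < d.Ψ y := by
  filter_upwards [eventually_ge_atTop (d.Φ d.xbar)] with y hy
  exact d.xbar_pos.trans_le (d.xbar_le_Ψ hy)

theorem monotoneOn_Ψ : MonotoneOn d.Ψ (Ici (d.Φ d.xbar)) := fun y hy z hz hyz => by
  rwa [← d.strictMono.le_iff_le (d.xbar_le_Ψ hy) (d.xbar_le_Ψ hz), d.inv_right y hy,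
    d.inv_right z hz]

theorem one_lt_ybar : 1 < d.ybar := one_lt_exp_iff.mpr (d.pos _ self_mem_Ici)

theorem aconst_pos {θ : ℝ} (hθ : 0 ≤ θ) : 0 < d.aconst θ := by
  have hp := d.pos _ self_mem_Ici
  have hΨ' := d.monotoneOn_Ψ.deriv_nonneg_Ici
  have hx := d.xbar_pos
  rw [aconst, ybar, log_exp, d.inv_left _ self_mem_Ici]
  positivity

theorem mul_sub_le_FPhi {θ y : ℝ} (hy : d.ybar < y) :
    y * (d.aconst θ * d.Ψ (log y) ^ θ - |d.bconst θ|) ≤ d.FPhi θ y := by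
  have hy1 : 1 ≤ y := d.one_lt_ybar.le.trans hy.le
  rw [FPhi, if_neg hy.not_ge]
  nlinarith [neg_abs_le (d.bconst θ), mul_nonneg (sub_nonneg.2 hy1) (abs_nonneg (d.bconst θ))]

theorem le_FPhi_div_mul {θ f g c : ℝ} (hθ : 0 ≤ θ) (hf : 0 < f) (hy : d.ybar < g / f)
    (hc : 0 ≤ c) (hcΨ : c ≤ d.Ψ (log (g / f))) (hcb : 2 * |d.bconst θ| ≤ d.aconst θ * c ^ θ) :
    d.aconst θ / 2 * c ^ θ * g ≤ d.FPhi θ (g / f) * f := by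
  have hg : 0 < g := (div_pos_iff_of_pos_right hf).mp ((zero_lt_one.trans d.one_lt_ybar).trans hy)
  have hpow : c ^ θ ≤ d.Ψ (log (g / f)) ^ θ := rpow_le_rpow hc hcΨ hθ
  have ha := d.aconst_pos hθ
  calc d.aconst θ / 2 * c ^ θ * g
      ≤ g * (d.aconst θ * d.Ψ (log (g / f)) ^ θ - |d.bconst θ|) := by
        nlinarith [mul_le_mul_of_nonneg_left hpow ha.le]
    _ = g / f * (d.aconst θ * d.Ψ (log (g / f)) ^ θ - |d.bconst θ|) * f := by field_simp
    _ ≤ d.FPhi θ (g / f) * f := by gcongr; exact d.mul_sub_le_FPhi hy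

theorem exists_eventually_mul_le_Ψ {κ : ℝ} (hκ : 0 < κ)
    (hΨκ : ∀ᶠ v in atTop, d.Ψ (κ * v) ≤ 2 * d.Ψ v) {u : ℝ → ℝ}
    (hu : ∀ᶠ x in atTop, φ x / κ ≤ u x) :
    ∃ c > 0, ∀ᶠ x in atTop, d.Φ d.xbar < u x ∧ c * x ≤ d.Ψ (u x) := by
  obtain ⟨c, hc, hcΨ⟩ := d.liminf_pos
  have hv : Tendsto (fun x => φ x / κ) atTop atTop := d.tendsto_atTop.atTop_div_const hκ
  refine ⟨c / 2, by positivity, ?_⟩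
  filter_upwards [hu, hcΨ, hv.eventually hΨκ, hv.eventually_gt_atTop (d.Φ d.xbar),
    eventually_gt_atTop 0] with x hux hcx hΨx hvx hx
  rw [mul_div_cancel₀ _ hκ.ne'] at hΨx
  refine ⟨hvx.trans_le hux, ?_⟩
  have hmono := d.monotoneOn_Ψ hvx.le (hvx.le.trans hux) hux
  linarith [(le_div_iff₀ hx).mp hcx]

end ClassIIData

theorem stmt10_general
    (φ f : ℝ → ℝ)
    (hf : ∀ x ∈ Set.Ioi (0:ℝ), f x = Real.exp (-(φ x)))
    (d : ClassIIData φ)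
    (hprv : PseudoRegularlyVarying d.Ψ)
    (θ : ℝ) (hθ : 1 < θ)
    (g : ℝ → ℝ)
    (ht : ∃ t : ℝ, 1 < t ∧ t < θ ∧ ∃ c : ℝ, 0 < c ∧ ∀ᶠ x in atTop, c ≤ x ^ (t + 1) * g x) :
    Ddiv (d.FPhi θ) f g = ⊤ := by
  obtain ⟨t, -, htθ, c, hc, hg⟩ := ht
  obtain ⟨κ, hκ, hΨκ⟩ := hprv.exists_eventually_le_two_mul d.eventually_Ψ_pos
  have hu := eventually_div_le_log_div d.tendsto_div_log hf hc hg hκ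
  obtain ⟨c₁, hc₁, hΨ⟩ :=
    d.exists_eventually_mul_le_Ψ (by linarith) hΨκ (hu.mono fun _ h => h.2)
  have ha := d.aconst_pos (θ := θ) (by linarith)
  have hb : Tendsto (fun x => d.aconst θ * (c₁ * x) ^ θ) atTop atTop :=
    ((tendsto_rpow_atTop (by linarith)).comp (tendsto_id.const_mul_atTop hc₁)).const_mul_atTop ha
  refine lintegral_Ioi_ofReal_eq_top_of_eventually_le (C := d.aconst θ / 2 * c₁ ^ θ * c)
    (s := θ - t - 1) 0 (by positivity) (by linarith) ?_
  filter_upwards [hg, hu, hΨ, hb.eventually_ge_atTop (2 * |d.bconst θ|), eventually_gt_atTop 0]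
    with x hgx hux ⟨hΦx, hΨx⟩ hbx hx
  have hfx : 0 < f x := by rw [hf x hx]; positivity
  have hy : d.ybar < g x / f x := by
    rw [ClassIIData.ybar, ← lt_log_iff_exp_lt (div_pos hux.1 hfx)]
    exact hΦx
  have hxθ : x ^ θ = x ^ (θ - t - 1) * x ^ (t + 1) := by rw [← rpow_add hx]; ring_nf
  calc d.aconst θ / 2 * c₁ ^ θ * c * x ^ (θ - t - 1)
      ≤ d.aconst θ / 2 * c₁ ^ θ * x ^ (θ - t - 1) * (x ^ (t + 1) * g x) := by
        rw [mul_right_comm _ c]; gcongr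
    _ = d.aconst θ / 2 * (c₁ * x) ^ θ * g x := by rw [mul_rpow hc₁.le hx.le, hxθ]; ring
    _ ≤ d.FPhi θ (g x / f x) * f x :=
        d.le_FPhi_div_mul (by linarith) hfx hy (by positivity) hΨx hbx

/-- Proposition 4.5 (i): fat-tailed alternatives are excluded,
pseudo-regularly varying case. -/
theorem stmt10
    (φ f : ℝ → ℝ)
    (hf : ∀ x ∈ Set.Ioi (0:ℝ), f x = Real.exp (-(φ x)))
    (hfc : ContinuousOn f (Set.Ioi 0))
    (hfint : ∫ x in Set.Ioi (0:ℝ), f x = 1)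
    (d : ClassIIData φ)
    (hprv : PseudoRegularlyVarying d.Ψ)
    (θ : ℝ) (hθ : 1 < θ)
    (g : ℝ → ℝ) (hgc : ContinuousOn g (Set.Ioi 0))
    (hg0 : ∀ x ∈ Set.Ioi (0:ℝ), 0 ≤ g x)
    (hgint : ∫ x in Set.Ioi (0:ℝ), g x = 1)
    (ht : ∃ t : ℝ, 1 < t ∧ t < θ ∧ ∃ c : ℝ, 0 < c ∧ ∀ᶠ x in atTop, c ≤ x ^ (t + 1) * g x) :
    Ddiv (d.FPhi θ) f g = ⊤ :=
  stmt10_general φ f hf d hprv θ hθ g ht
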